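/- arXiv:quant-ph/0211034 — 2 statements merged into one kernel-verified Lean document; each statement's English description precedes it below -/
import Mathlib

section
/- Let (ρ_m) be a stationary family of density matrices satisfying the weak mixing condition: for all m and all a, b on H^{⊗m}, lim_{n→∞} (1/n) Σ_{i=m}^n |tr(ρ_{m+i} (a ⊗ I^{⊗(i−m)} ⊗ b)) − tr(ρ_m a) tr(ρ_m b)| = 0. Then for any trace-preserving Kraus map ℰ, the family (ℰ^{⊗m}(ρ_m)) is also weakly mixing. -/
open Matrix Finset Filter Topology

/-- Operators on the `m`-fold tensor power of a `d`-dimensional Hilbert space,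
realized as matrices indexed by `Fin m → Fin d`. -/
abbrev MP (d m : ℕ) := Matrix (Fin m → Fin d) (Fin m → Fin d) ℂ

/-- The tensor (Kronecker) product of `m` one-site matrices. -/
def kron {d : ℕ} (m : ℕ) (B : Fin m → Matrix (Fin d) (Fin d) ℂ) : MP d m :=
  Matrix.of fun x y => ∏ k, B k (x k) (y k)

/-- The `m`-fold tensor product channel `ℰ^{⊗ m}` of the Kraus map
`ℰ(ρ) = ∑ j, A j * ρ * (A j)ᴴ`. -/
noncomputable def tensorE {d : ℕ} {ι : Type} [Fintype ι] (A : ι → Matrix (Fin d) (Fin d) ℂ) (m : ℕ)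
    (ρ : MP d m) : MP d m :=
  ∑ j : Fin m → ι, kron m (fun k => A (j k)) * ρ * (kron m (fun k => A (j k)))ᴴ

/-- The `m`-fold tensor product `(ℰ*)^{⊗ m}` of the dual (Heisenberg picture) map
`ℰ*(a) = ∑ j, (A j)ᴴ * a * A j`. -/
noncomputable def tensorDual {d : ℕ} {ι : Type} [Fintype ι] (A : ι → Matrix (Fin d) (Fin d) ℂ) (m : ℕ)
    (a : MP d m) : MP d m :=
  ∑ j : Fin m → ι, (kron m (fun k => A (j k)))ᴴ * a * kron m (fun k => A (j k))

/-- The operator `a ⊗ I^{⊗(i-m)} ⊗ b` on `H^{⊗(m+i)}` (for `m ≤ i`), where `a` acts on the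
first `m` sites, `b` acts on the sites `i,…,i+m-1`, and identity acts in between. -/
def sandw (d m i : ℕ) (a b : MP d m) : MP d (m + i) :=
  Matrix.of fun x y =>
    a (fun k => x (Fin.castLE (Nat.le_add_right m i) k))
      (fun k => y (Fin.castLE (Nat.le_add_right m i) k)) *
    b (fun k => x ⟨i + k.1, by have := k.2; omega⟩) (fun k => y ⟨i + k.1, by have := k.2; omega⟩) *
    ∏ j : Fin (m + i), if m ≤ (j : ℕ) ∧ (j : ℕ) < i then (if x j = y j then (1:ℂ) else 0) else 1

/-- The operator `a ⊗ I^{⊗ i}` on `H^{⊗(m+i)}`. -/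
def rightPad (d m i : ℕ) (a : MP d m) : MP d (m + i) :=
  Matrix.of fun x y =>
    a (fun k => x (Fin.castLE (Nat.le_add_right m i) k))
      (fun k => y (Fin.castLE (Nat.le_add_right m i) k)) *
    ∏ j : Fin (m + i), if m ≤ (j : ℕ) then (if x j = y j then (1:ℂ) else 0) else 1

/-- The operator `I^{⊗ i} ⊗ a` on `H^{⊗(m+i)}`. -/
def leftPad (d m i : ℕ) (a : MP d m) : MP d (m + i) :=
  Matrix.of fun x y =>
    a (fun k => x ⟨i + k.1, by have := k.2; omega⟩) (fun k => y ⟨i + k.1, by have := k.2; omega⟩) *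
    ∏ j : Fin (m + i), if (j : ℕ) < i then (if x j = y j then (1:ℂ) else 0) else 1

/-!
Moving the channel onto the observables, `tr(ℰ^{⊗k}(ρ) X) = tr(ρ (ℰ*)^{⊗k}(X))`, every term of the
Cesàro average for the family `ℰ^{⊗m}(ρ_m)` and observables `a, b` becomes the corresponding term for
`ρ_m` and observables `(ℰ*)^{⊗m}(a), (ℰ*)^{⊗m}(b)`. This uses that `(ℰ*)^{⊗k}` acts site by site and
that `ℰ*` is unital (`∑ j, A_jᴴ A_j = 1`), so that
`(ℰ*)^{⊗(m+i)}(a ⊗ I ⊗ b) = (ℰ*)^{⊗m}(a) ⊗ I ⊗ (ℰ*)^{⊗m}(b)`.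
-/

open scoped Kronecker

namespace Matrix

section PiKron
variable {R α σ : Type*} [CommSemiring R] [Fintype σ]

def piKron (B : σ → Matrix α α R) : Matrix (σ → α) (σ → α) R :=
  of fun x y => ∏ k, B k (x k) (y k)

variable [DecidableEq α]

lemma piKron_one : piKron (fun _ : σ => (1 : Matrix α α R)) = 1 := by
  ext x y
  by_cases h : x = y
  · simp [piKron, h, one_apply]
  · obtain ⟨k, hk⟩ := Function.ne_iff.mp h
    rw [piKron, of_apply, one_apply_ne h]
    exact prod_eq_zero (mem_univ k) (one_apply_ne hk)

lemma one_apply_eq_prod (x y : σ → α) :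
    (1 : Matrix (σ → α) (σ → α) R) x y = ∏ k, (1 : Matrix α α R) (x k) (y k) :=
  (congr_fun₂ piKron_one x y).symm

end PiKron

lemma trace_sum_mul_mul_mul {R n κ : Type*} [CommSemiring R] [Fintype n] [Fintype κ]
    (K L : κ → Matrix n n R) (ρ X : Matrix n n R) :
    trace ((∑ j, K j * ρ * L j) * X) = trace (ρ * ∑ j, L j * X * K j) := by
  simp only [sum_mul, mul_sum, trace_sum]
  refine sum_congr rfl fun j _ => ?_
  rw [Matrix.mul_assoc, Matrix.mul_assoc, trace_mul_comm, Matrix.mul_assoc, Matrix.mul_assoc,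
    ← Matrix.mul_assoc (L j)]

section PiDual
variable {R α ι σ τ : Type*} [CommSemiring R] [StarRing R] [Fintype α] [Fintype ι]
  [Fintype σ] [DecidableEq σ] [Fintype τ] [DecidableEq τ]

noncomputable def piDual (A : ι → Matrix α α R) (X : Matrix (σ → α) (σ → α) R) :
    Matrix (σ → α) (σ → α) R :=
  ∑ j : σ → ι, (piKron fun k => A (j k))ᴴ * X * piKron fun k => A (j k)

lemma piDual_apply (A : ι → Matrix α α R) (X : Matrix (σ → α) (σ → α) R) (x y : σ → α) :
    piDual A X x y =
      ∑ u, ∑ v, X u v * ∏ k, ∑ j, star (A j (u k) (x k)) * A j (v k) (y k) := by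
  simp only [piDual, piKron, sum_apply, mul_apply, conjTranspose_apply, of_apply,
    Fintype.prod_sum, star_prod, mul_sum, sum_mul]
  rw [sum_comm]
  refine (sum_congr rfl fun _ _ => sum_comm).trans ?_
  rw [sum_comm]
  refine sum_congr rfl fun u _ => sum_congr rfl fun v _ => sum_congr rfl fun j _ => ?_
  rw [prod_mul_distrib]
  ring

lemma piDual_one [DecidableEq α] {A : ι → Matrix α α R} (hA : ∑ j, (A j)ᴴ * A j = 1) :
    piDual A (1 : Matrix (σ → α) (σ → α) R) = 1 := by
  have hA_apply (a b : α) : ∑ c, ∑ j, star (A j c a) * A j c b = (1 : Matrix α α R) a b := by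
    rw [← hA, sum_comm]
    simp [sum_apply, mul_apply, conjTranspose_apply]
  ext x y
  simp only [piDual_apply, one_apply, ite_mul, one_mul, zero_mul, sum_ite_eq, mem_univ, if_true]
  rw [← Fintype.prod_sum (fun k c => ∑ j, star (A j c (x k)) * A j c (y k))]
  simp only [hA_apply]
  exact (one_apply_eq_prod x y).symm.trans (one_apply ..)

lemma piDual_submatrix_comp (A : ι → Matrix α α R) (f : σ ≃ τ)
    (X : Matrix (σ → α) (σ → α) R) :
    piDual A (X.submatrix (· ∘ f) (· ∘ f)) = (piDual A X).submatrix (· ∘ f) (· ∘ f) := by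
  ext x y
  simp only [piDual_apply, submatrix_apply]
  let e : (σ → α) ≃ (τ → α) := f.arrowCongr (Equiv.refl α)
  rw [← e.sum_comp]
  refine sum_congr rfl fun u _ => ?_
  rw [← e.sum_comp]
  refine sum_congr rfl fun v _ => ?_
  rw [← f.prod_comp]
  simp [e, Function.comp_def]

lemma piDual_kronecker (A : ι → Matrix α α R) (X : Matrix (σ → α) (σ → α) R)
    (Y : Matrix (τ → α) (τ → α) R) :
    piDual A ((X ⊗ₖ Y).submatrix (Equiv.sumArrowEquivProdArrow σ τ α)
        (Equiv.sumArrowEquivProdArrow σ τ α)) =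
      (piDual A X ⊗ₖ piDual A Y).submatrix (Equiv.sumArrowEquivProdArrow σ τ α)
        (Equiv.sumArrowEquivProdArrow σ τ α) := by
  ext x y
  simp only [piDual_apply, submatrix_apply, kroneckerMap_apply]
  set e := Equiv.sumArrowEquivProdArrow σ τ α
  rw [← e.symm.sum_comp, Fintype.sum_prod_type, sum_mul_sum]
  refine sum_congr rfl fun u₁ _ => sum_congr rfl fun u₂ _ => ?_
  rw [← e.symm.sum_comp, Fintype.sum_prod_type, sum_mul_sum]
  refine sum_congr rfl fun v₁ _ => sum_congr rfl fun v₂ _ => ?_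
  rw [Fintype.prod_sum_type]
  simp only [e, Equiv.apply_symm_apply, Equiv.sumArrowEquivProdArrow_symm_apply_inl,
    Equiv.sumArrowEquivProdArrow_symm_apply_inr, Equiv.sumArrowEquivProdArrow_apply_fst,
    Equiv.sumArrowEquivProdArrow_apply_snd]
  ring

end PiDual

end Matrix

section Sandwich
variable {m i : ℕ}

def finSandwichEquiv (h : m ≤ i) : (Fin m ⊕ Fin (i - m)) ⊕ Fin m ≃ Fin (m + i) :=
  (Equiv.sumCongr finSumFinEquiv (Equiv.refl _)).trans (finSumFinEquiv.trans (finCongr (by omega)))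

@[simp] lemma finSandwichEquiv_inl_inl (h : m ≤ i) (k : Fin m) :
    finSandwichEquiv h (.inl (.inl k)) = Fin.castLE (Nat.le_add_right m i) k := rfl

@[simp] lemma finSandwichEquiv_inl_inr (h : m ≤ i) (k : Fin (i - m)) :
    finSandwichEquiv h (.inl (.inr k)) = ⟨m + k, by omega⟩ := rfl

@[simp] lemma finSandwichEquiv_inr (h : m ≤ i) (k : Fin m) :
    finSandwichEquiv h (.inr k) = ⟨i + k, by omega⟩ :=
  Fin.ext (by simp [finSandwichEquiv]; omega)

lemma sandw_eq_submatrix (h : m ≤ i) {d : ℕ} (a b : MP d m) :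
    sandw d m i a b =
      ((((a ⊗ₖ (1 : MP d (i - m))).submatrix (Equiv.sumArrowEquivProdArrow _ _ _)
          (Equiv.sumArrowEquivProdArrow _ _ _)) ⊗ₖ b).submatrix
          (Equiv.sumArrowEquivProdArrow _ _ _) (Equiv.sumArrowEquivProdArrow _ _ _)).submatrix
        (· ∘ finSandwichEquiv h) (· ∘ finSandwichEquiv h) := by
  ext x y
  rw [sandw, of_apply, ← (finSandwichEquiv h).prod_comp, Fintype.prod_sum_type,
    Fintype.prod_sum_type]
  have h₁ (k : Fin m) : ¬(m ≤ (k : ℕ) ∧ (k : ℕ) < i) := fun hk => by omega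
  have h₂ (k : Fin (i - m)) : m ≤ m + (k : ℕ) ∧ m + (k : ℕ) < i := by omega
  have h₃ (k : Fin m) : ¬(m ≤ i + (k : ℕ) ∧ i + (k : ℕ) < i) := by omega
  simp only [submatrix_apply, kroneckerMap_apply, one_apply_eq_prod]
  simp only [one_apply, Equiv.sumArrowEquivProdArrow, Equiv.coe_fn_mk, Function.comp_def,
    finSandwichEquiv_inl_inl, finSandwichEquiv_inl_inr, finSandwichEquiv_inr, Fin.val_castLE,
    h₁, h₂, h₃, and_self, if_true, if_false, prod_const_one, one_mul, mul_one]
  -- not `ring`: the two sides' `ite`s carry decidability instances that agree only up to unfolding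
  exact mul_right_comm _ _ _

end Sandwich

section TensorDual
variable {d : ℕ} {ι : Type} [Fintype ι] (A : ι → Matrix (Fin d) (Fin d) ℂ)

lemma tensorDual_eq_piDual (m : ℕ) : tensorDual A m = piDual A := rfl

lemma trace_tensorE_mul (k : ℕ) (ρ X : MP d k) :
    (tensorE A k ρ * X).trace = (ρ * tensorDual A k X).trace :=
  trace_sum_mul_mul_mul _ _ ρ X

lemma tensorDual_sandw (hA : ∑ j, (A j)ᴴ * A j = 1) {m i : ℕ} (h : m ≤ i) (a b : MP d m) :
    tensorDual A (m + i) (sandw d m i a b) =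
      sandw d m i (tensorDual A m a) (tensorDual A m b) := by
  rw [sandw_eq_submatrix h, sandw_eq_submatrix h, tensorDual_eq_piDual, tensorDual_eq_piDual,
    piDual_submatrix_comp, piDual_kronecker, piDual_kronecker, piDual_one hA]

end TensorDual

open scoped ComplexOrder

theorem tensorE_preserves_weak_mixing_general {d : ℕ} {ι : Type} [Fintype ι]
    (A : ι → Matrix (Fin d) (Fin d) ℂ)
    (hA : ∑ j, (A j)ᴴ * A j = 1)
    (ρ : (m : ℕ) → MP d m)
    -- weak mixing
    (hwm : ∀ m : ℕ, ∀ a b : MP d m,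
      Tendsto (fun n : ℕ => (1 / (n : ℝ)) *
          ∑ i ∈ Finset.Icc m n,
            ‖(ρ (m + i) * sandw d m i a b).trace -
              (ρ m * a).trace * (ρ m * b).trace‖)
        atTop (𝓝 0)) :
    ∀ m : ℕ, ∀ a b : MP d m,
      Tendsto (fun n : ℕ => (1 / (n : ℝ)) *
          ∑ i ∈ Finset.Icc m n,
            ‖(tensorE A (m + i) (ρ (m + i)) * sandw d m i a b).trace -
              (tensorE A m (ρ m) * a).trace * (tensorE A m (ρ m) * b).trace‖)
        atTop (𝓝 0) := by
  intro m a b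
  refine (hwm m (tensorDual A m a) (tensorDual A m b)).congr fun n => ?_
  congr 1
  refine sum_congr rfl fun i hi => ?_
  rw [trace_tensorE_mul, trace_tensorE_mul, trace_tensorE_mul,
    tensorDual_sandw A hA (mem_Icc.mp hi).1]

/-- A tensor-product trace-preserving Kraus map preserves the weak mixing property of a
stationary family of density matrices. -/
theorem tensorE_preserves_weak_mixing {d : ℕ} {ι : Type} [Fintype ι]
    (A : ι → Matrix (Fin d) (Fin d) ℂ)
    (hA : ∑ j, (A j)ᴴ * A j = 1)
    (ρ : (m : ℕ) → MP d m)
    -- each `ρ m` is a density matrix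
    (hdens : ∀ m, (ρ m).PosSemidef ∧ (ρ m).trace = 1)
    -- stationarity: `tr(ρ_m a) = tr(ρ_{m+i} (I^{⊗ i} ⊗ a))`
    (hstat : ∀ m i : ℕ, ∀ a : MP d m,
      (ρ m * a).trace = (ρ (m + i) * leftPad d m i a).trace)
    -- weak mixing
    (hwm : ∀ m : ℕ, ∀ a b : MP d m,
      Tendsto (fun n : ℕ => (1 / (n : ℝ)) *
          ∑ i ∈ Finset.Icc m n,
            ‖(ρ (m + i) * sandw d m i a b).trace -
              (ρ m * a).trace * (ρ m * b).trace‖)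
        atTop (𝓝 0)) :
    ∀ m : ℕ, ∀ a b : MP d m,
      Tendsto (fun n : ℕ => (1 / (n : ℝ)) *
          ∑ i ∈ Finset.Icc m n,
            ‖(tensorE A (m + i) (ρ (m + i)) * sandw d m i a b).trace -
              (tensorE A m (ρ m) * a).trace * (tensorE A m (ρ m) * b).trace‖)
        atTop (𝓝 0) :=
  tensorE_preserves_weak_mixing_general A hA ρ hwm
end

section
/- Let (ρ_m) be a stationary family of density matrices satisfying the strong mixing condition: for all m and all a, b on H^{⊗m}, lim_{i→∞} tr(ρ_{m+i} (a ⊗ I^{⊗(i−m)} ⊗ b)) = tr(ρ_m a) tr(ρ_m b). Then for any trace-preserving Kraus map ℰ, the family (ℰ^{⊗m}(ρ_m)) is also strongly mixing. -/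
open Matrix Finset Filter Topology

open scoped ComplexOrder

section Aux

variable {d : ℕ} {ι : Type} [Fintype ι]

lemma kron_conjTranspose (n : ℕ) (B : Fin n → Matrix (Fin d) (Fin d) ℂ) :
    (kron n B)ᴴ = kron n (fun k => (B k)ᴴ) := by
  ext x y
  simp [kron, conjTranspose_apply]

lemma kron_mul (n : ℕ) (B C : Fin n → Matrix (Fin d) (Fin d) ℂ) :
    kron n B * kron n C = kron n (fun k => B k * C k) := by
  ext x y
  simp only [Matrix.mul_apply, kron, of_apply]
  rw [Finset.prod_univ_sum, Fintype.piFinset_univ]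
  exact Finset.sum_congr rfl fun u _ => (Finset.prod_mul_distrib).symm

lemma sum_kron (n : ℕ) {κ : Type*} [Fintype κ] (F : Fin n → κ → Matrix (Fin d) (Fin d) ℂ) :
    ∑ j : Fin n → κ, kron n (fun k => F k (j k)) = kron n (fun k => ∑ c, F k c) := by
  ext x y
  simp only [Matrix.sum_apply, kron, of_apply]
  rw [Finset.prod_univ_sum, Fintype.piFinset_univ]

lemma tensorDual_kron (A : ι → Matrix (Fin d) (Fin d) ℂ) (n : ℕ)
    (B : Fin n → Matrix (Fin d) (Fin d) ℂ) :
    tensorDual A n (kron n B) = kron n (fun k => ∑ j, (A j)ᴴ * B k * A j) := by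
  rw [tensorDual, ← sum_kron n (fun k j => (A j)ᴴ * B k * A j)]
  refine Finset.sum_congr rfl fun j _ => ?_
  rw [kron_conjTranspose, kron_mul, kron_mul]

lemma kron_basis (m : ℕ) (a : MP d m) :
    a = ∑ p : Fin m → Fin d, ∑ q : Fin m → Fin d,
      a p q • kron m (fun k => Matrix.single (p k) (q k) 1) := by
  ext x y
  simp only [Matrix.sum_apply, Matrix.smul_apply, kron, of_apply, smul_eq_mul,
    Matrix.single, of_apply]
  have : ∀ p q : Fin m → Fin d,
      (∏ k, (if p k = x k ∧ q k = y k then (1:ℂ) else 0)) = if p = x ∧ q = y then 1 else 0 := by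
    intro p q
    rw [Finset.prod_boole]
    congr 1
    simp only [Finset.mem_univ, true_implies]
    rw [forall_and, ← funext_iff, ← funext_iff]
  simp only [this, mul_boole]
  simp [ite_and, Finset.sum_ite_eq']

lemma sandw_sum_left (m i : ℕ) {κ : Type*} (S : Finset κ) (f : κ → MP d m) (b : MP d m) :
    sandw d m i (∑ s ∈ S, f s) b = ∑ s ∈ S, sandw d m i (f s) b := by
  ext x y
  simp [sandw, Matrix.sum_apply, Finset.sum_mul]

lemma sandw_sum_right (m i : ℕ) {κ : Type*} (S : Finset κ) (a : MP d m) (f : κ → MP d m) :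
    sandw d m i a (∑ s ∈ S, f s) = ∑ s ∈ S, sandw d m i a (f s) := by
  ext x y
  simp [sandw, Matrix.sum_apply, Finset.sum_mul, Finset.mul_sum]

lemma sandw_smul_left (m i : ℕ) (c : ℂ) (a b : MP d m) :
    sandw d m i (c • a) b = c • sandw d m i a b := by
  ext x y
  simp [sandw, Matrix.smul_apply]
  ring

lemma sandw_smul_right (m i : ℕ) (c : ℂ) (a b : MP d m) :
    sandw d m i a (c • b) = c • sandw d m i a b := by
  ext x y
  simp [sandw, Matrix.smul_apply]
  ring

lemma tensorDual_sum (A : ι → Matrix (Fin d) (Fin d) ℂ) (n : ℕ) {κ : Type*} (S : Finset κ)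
    (f : κ → MP d n) :
    tensorDual A n (∑ s ∈ S, f s) = ∑ s ∈ S, tensorDual A n (f s) := by
  simp only [tensorDual, Finset.mul_sum, Finset.sum_mul]
  rw [Finset.sum_comm]

lemma tensorDual_smul (A : ι → Matrix (Fin d) (Fin d) ℂ) (n : ℕ) (c : ℂ) (a : MP d n) :
    tensorDual A n (c • a) = c • tensorDual A n a := by
  simp only [tensorDual, Matrix.mul_smul, Matrix.smul_mul, Finset.smul_sum]

/-- The piecewise one-site family realizing `sandw` of two krons. -/
def Dfam {d : ℕ} (m t : ℕ) (B C : Fin m → Matrix (Fin d) (Fin d) ℂ) :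
    Fin (m + (t + m)) → Matrix (Fin d) (Fin d) ℂ := fun j =>
  if h : (j : ℕ) < m then B ⟨j, h⟩
  else if h2 : (j : ℕ) < t + m then 1
  else C ⟨(j : ℕ) - (t + m), by have := j.2; omega⟩

set_option maxHeartbeats 1000000 in
lemma sandw_kron (m t : ℕ) (B C : Fin m → Matrix (Fin d) (Fin d) ℂ) :
    sandw d m (t + m) (kron m B) (kron m C) = kron (m + (t + m)) (Dfam m t B C) := by
  ext x y
  simp only [sandw, kron, of_apply]
  rw [Fin.prod_univ_add (f := fun j => Dfam m t B C j (x j) (y j)),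
      Fin.prod_univ_add (f := fun j => Dfam m t B C (Fin.natAdd m j) (x (Fin.natAdd m j)) (y (Fin.natAdd m j))),
      Fin.prod_univ_add (f := fun j : Fin (m + (t + m)) =>
        if m ≤ (j : ℕ) ∧ (j : ℕ) < t + m then (if x j = y j then (1:ℂ) else 0) else 1),
      Fin.prod_univ_add (f := fun j : Fin (t + m) =>
        if m ≤ ((Fin.natAdd m j : Fin (m + (t+m))) : ℕ) ∧ ((Fin.natAdd m j : Fin (m + (t+m))) : ℕ) < t + m
        then (if x (Fin.natAdd m j) = y (Fin.natAdd m j) then (1:ℂ) else 0) else 1)]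
  have h1 : ∀ k : Fin m, Dfam m t B C (Fin.castAdd (t + m) k) (x (Fin.castAdd (t + m) k)) (y (Fin.castAdd (t + m) k))
      = B k (x (Fin.castLE (Nat.le_add_right m (t + m)) k)) (y (Fin.castLE (Nat.le_add_right m (t + m)) k)) := by
    intro k
    have hk : ((Fin.castAdd (t + m) k : Fin (m + (t+m))) : ℕ) = (k : ℕ) := rfl
    rw [Dfam, dif_pos (by rw [hk]; exact k.2)]
    rfl
  have h2 : ∀ k : Fin t, Dfam m t B C (Fin.natAdd m (Fin.castAdd m k)) (x (Fin.natAdd m (Fin.castAdd m k))) (y (Fin.natAdd m (Fin.castAdd m k)))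
      = (if x (Fin.natAdd m (Fin.castAdd m k)) = y (Fin.natAdd m (Fin.castAdd m k)) then (1:ℂ) else 0) := by
    intro k
    have hk : ((Fin.natAdd m (Fin.castAdd m k) : Fin (m + (t+m))) : ℕ) = m + (k : ℕ) := rfl
    rw [Dfam, dif_neg (by rw [hk]; omega), dif_pos (by rw [hk]; have := k.2; omega), Matrix.one_apply]
  have h3 : ∀ k : Fin m, Dfam m t B C (Fin.natAdd m (Fin.natAdd t k)) (x (Fin.natAdd m (Fin.natAdd t k))) (y (Fin.natAdd m (Fin.natAdd t k)))
      = C k (x ⟨t + m + (k : ℕ), by have := k.2; omega⟩) (y ⟨t + m + (k : ℕ), by have := k.2; omega⟩) := by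
    intro k
    have he : (Fin.natAdd m (Fin.natAdd t k) : Fin (m + (t+m))) = ⟨t + m + (k : ℕ), by have := k.2; omega⟩ := by
      apply Fin.ext; show m + (t + (k : ℕ)) = t + m + (k : ℕ); omega
    rw [he, Dfam, dif_neg (by simp; omega), dif_neg (by simp)]
    congr 1
    apply Fin.ext
    show t + m + (k : ℕ) - (t + m) = (k : ℕ)
    omega
  rw [Finset.prod_congr rfl fun k _ => h1 k, Finset.prod_congr rfl fun k _ => h2 k,
      Finset.prod_congr rfl fun k _ => h3 k]
  have g1 : ∀ k : Fin m, (if m ≤ ((Fin.castAdd (t+m) k : Fin (m + (t+m))) : ℕ) ∧ ((Fin.castAdd (t+m) k : Fin (m + (t+m))) : ℕ) < t + m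
      then (if x (Fin.castAdd (t+m) k) = y (Fin.castAdd (t+m) k) then (1:ℂ) else 0) else 1) = 1 := by
    intro k
    rw [if_neg]
    have hk : ((Fin.castAdd (t + m) k : Fin (m + (t+m))) : ℕ) = (k : ℕ) := rfl
    rw [hk]
    have := k.2; omega
  have g2 : ∀ k : Fin t, (if m ≤ ((Fin.natAdd m (Fin.castAdd m k) : Fin (m + (t+m))) : ℕ) ∧ ((Fin.natAdd m (Fin.castAdd m k) : Fin (m + (t+m))) : ℕ) < t + m
      then (if x (Fin.natAdd m (Fin.castAdd m k)) = y (Fin.natAdd m (Fin.castAdd m k)) then (1:ℂ) else 0) else 1)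
      = (if x (Fin.natAdd m (Fin.castAdd m k)) = y (Fin.natAdd m (Fin.castAdd m k)) then (1:ℂ) else 0) := by
    intro k
    rw [if_pos]
    have hk : ((Fin.natAdd m (Fin.castAdd m k) : Fin (m + (t+m))) : ℕ) = m + (k : ℕ) := rfl
    rw [hk]
    have := k.2; omega
  have g3 : ∀ k : Fin m, (if m ≤ ((Fin.natAdd m (Fin.natAdd t k) : Fin (m + (t+m))) : ℕ) ∧ ((Fin.natAdd m (Fin.natAdd t k) : Fin (m + (t+m))) : ℕ) < t + m
      then (if x (Fin.natAdd m (Fin.natAdd t k)) = y (Fin.natAdd m (Fin.natAdd t k)) then (1:ℂ) else 0) else 1) = 1 := by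
    intro k
    rw [if_neg]
    have hk : ((Fin.natAdd m (Fin.natAdd t k) : Fin (m + (t+m))) : ℕ) = m + (t + (k : ℕ)) := rfl
    rw [hk]
    omega
  rw [Finset.prod_congr rfl fun k _ => g1 k, Finset.prod_congr rfl fun k _ => g2 k,
      Finset.prod_congr rfl fun k _ => g3 k]
  simp only [Finset.prod_const_one, one_mul, mul_one]
  ring

lemma dual_Dfam (A : ι → Matrix (Fin d) (Fin d) ℂ) (hA : ∑ j, (A j)ᴴ * A j = 1)
    (m t : ℕ) (B C : Fin m → Matrix (Fin d) (Fin d) ℂ) :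
    (fun k => ∑ j, (A j)ᴴ * Dfam m t B C k * A j)
      = Dfam m t (fun k => ∑ j, (A j)ᴴ * B k * A j) (fun k => ∑ j, (A j)ᴴ * C k * A j) := by
  funext k
  unfold Dfam
  split_ifs <;> simp [Matrix.mul_one, hA]

lemma key_kron (A : ι → Matrix (Fin d) (Fin d) ℂ) (hA : ∑ j, (A j)ᴴ * A j = 1)
    (m t : ℕ) (B C : Fin m → Matrix (Fin d) (Fin d) ℂ) :
    tensorDual A (m + (t + m)) (sandw d m (t + m) (kron m B) (kron m C))
      = sandw d m (t + m) (tensorDual A m (kron m B)) (tensorDual A m (kron m C)) := by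
  rw [sandw_kron, tensorDual_kron, tensorDual_kron, tensorDual_kron, sandw_kron]
  exact congrArg (kron (m + (t + m))) (dual_Dfam A hA m t B C)

lemma key (A : ι → Matrix (Fin d) (Fin d) ℂ) (hA : ∑ j, (A j)ᴴ * A j = 1)
    (m t : ℕ) (a b : MP d m) :
    tensorDual A (m + (t + m)) (sandw d m (t + m) a b)
      = sandw d m (t + m) (tensorDual A m a) (tensorDual A m b) := by
  rw [kron_basis m a, kron_basis m b]
  simp only [sandw_sum_left, sandw_sum_right, sandw_smul_left, sandw_smul_right,
    tensorDual_sum, tensorDual_smul]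
  refine Finset.sum_congr rfl fun p _ => Finset.sum_congr rfl fun q _ => ?_
  refine congrArg _ (Finset.sum_congr rfl fun r _ => Finset.sum_congr rfl fun s _ => ?_)
  refine congrArg _ ?_
  exact key_kron A hA m t _ _

lemma trace_dual (A : ι → Matrix (Fin d) (Fin d) ℂ) (n : ℕ) (ρ c : MP d n) :
    (tensorE A n ρ * c).trace = (ρ * tensorDual A n c).trace := by
  simp only [tensorE, tensorDual, Finset.sum_mul, Finset.mul_sum, Matrix.trace_sum]
  refine Finset.sum_congr rfl fun j _ => ?_
  simp only [Matrix.mul_assoc]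
  rw [Matrix.trace_mul_comm]
  simp only [Matrix.mul_assoc]

end Aux

/-- A tensor-product trace-preserving Kraus map preserves the strong mixing property of a
stationary family of density matrices. -/
theorem tensorE_preserves_strong_mixing {d : ℕ} {ι : Type} [Fintype ι]
    (A : ι → Matrix (Fin d) (Fin d) ℂ)
    (hA : ∑ j, (A j)ᴴ * A j = 1)
    (ρ : (m : ℕ) → MP d m)
    -- each `ρ m` is a density matrix
    (hdens : ∀ m, (ρ m).PosSemidef ∧ (ρ m).trace = 1)
    -- stationarity: `tr(ρ_m a) = tr(ρ_{m+i} (I^{⊗ i} ⊗ a))`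
    (hstat : ∀ m i : ℕ, ∀ a : MP d m,
      (ρ m * a).trace = (ρ (m + i) * leftPad d m i a).trace)
    -- strong mixing
    (hsm : ∀ m : ℕ, ∀ a b : MP d m,
      Tendsto (fun i : ℕ => (ρ (m + i) * sandw d m i a b).trace)
        atTop (𝓝 ((ρ m * a).trace * (ρ m * b).trace))) :
    ∀ m : ℕ, ∀ a b : MP d m,
      Tendsto (fun i : ℕ => (tensorE A (m + i) (ρ (m + i)) * sandw d m i a b).trace)
        atTop (𝓝 ((tensorE A m (ρ m) * a).trace * (tensorE A m (ρ m) * b).trace)) := by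
  intro m a b
  rw [trace_dual A m (ρ m) a, trace_dual A m (ρ m) b]
  refine Filter.Tendsto.congr' ?_ (hsm m (tensorDual A m a) (tensorDual A m b))
  filter_upwards [eventually_ge_atTop m] with i hi
  obtain ⟨t, rfl⟩ : ∃ t, i = t + m := ⟨i - m, by omega⟩
  rw [trace_dual A (m + (t + m)) (ρ (m + (t + m))) (sandw d m (t + m) a b),
      key A hA m t a b]
end
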